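/- arXiv:1707.05491 — 3 statements merged into one kernel-verified Lean document; each statement's English description precedes it below -/
import Mathlib

section
/- Let S be a minimal separator in a graph G, let D₁ and D₂ be two components of G − S full to S, and let A ⊆ D₁ be a nonempty set inducing a connected subgraph such that N[A] ⊇ D₁ (i.e., every vertex of D₁ lies in the closed neighborhood of A). Then the set ∂A = N(V(G) \ N[A]) is a minimal separator in G with one full component containing A and one full component containing D₂. -/
open SimpleGraph

variable {V : Type*}

/-- `D` is (the vertex set of) a connected component of `G - S`. -/
def IsCompOf (G : SimpleGraph V) (S D : Set V) : Prop :=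
  D.Nonempty ∧ Disjoint D S ∧ (G.induce D).Connected ∧
    ∀ v ∈ D, ∀ w : V, G.Adj v w → w ∉ S → w ∈ D

/-- The open neighborhood `N(D)` of a vertex set `D`. -/
def nbhd (G : SimpleGraph V) (D : Set V) : Set V :=
  {v | v ∉ D ∧ ∃ d ∈ D, G.Adj v d}

/-- The closed neighborhood `N[D]` of a vertex set `D`. -/
def closedNbhd (G : SimpleGraph V) (D : Set V) : Set V :=
  D ∪ nbhd G D

/-- `D` is full to `S`: every vertex of `S` has a neighbor in `D`. -/
def FullTo (G : SimpleGraph V) (S D : Set V) : Prop :=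
  ∀ s ∈ S, ∃ d ∈ D, G.Adj s d

/-- `S` is a minimal separator: `G - S` has at least two components full to `S`. -/
def IsMinSep (G : SimpleGraph V) (S : Set V) : Prop :=
  ∃ D₁ D₂ : Set V, IsCompOf G S D₁ ∧ IsCompOf G S D₂ ∧ D₁ ≠ D₂ ∧
    FullTo G S D₁ ∧ FullTo G S D₂

lemma reach_mono' (G : SimpleGraph V) {D E : Set V} (h : D ⊆ E) {u v : V}
    (hu : u ∈ D) (hv : v ∈ D) (hr : (G.induce D).Reachable ⟨u,hu⟩ ⟨v,hv⟩) :
    (G.induce E).Reachable ⟨u, h hu⟩ ⟨v, h hv⟩ := by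
  let f : G.induce D →g G.induce E := ⟨fun x => ⟨x.1, h x.2⟩, fun a => a⟩
  exact hr.map f

lemma mem_of_walk' (G : SimpleGraph V) {D : Set V} (P : Set V)
    (hclosed : ∀ v ∈ P, ∀ w : V, G.Adj v w → w ∈ D → w ∈ P)
    {x y : ↥D} (p : (G.induce D).Walk x y) : ↑x ∈ P → ↑y ∈ P := by
  induction p with
  | nil => exact id
  | cons h q ih => exact fun hx => ih (hclosed _ hx _ h (Subtype.mem _))

lemma reach_restrict' (G : SimpleGraph V) {D : Set V} (P : Set V)
    (hclosed : ∀ v ∈ P, ∀ w : V, G.Adj v w → w ∈ D → w ∈ P)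
    {x y : ↥D} (p : (G.induce D).Walk x y) :
    ∀ hx : ↑x ∈ P, ∃ hy : ↑y ∈ P, (G.induce P).Reachable ⟨↑x, hx⟩ ⟨↑y, hy⟩ := by
  induction p with
  | nil => exact fun hx => ⟨hx, Reachable.refl _⟩
  | cons h q ih =>
    intro hx
    have hu := hclosed _ hx _ h (Subtype.mem _)
    obtain ⟨hy, hr⟩ := ih hu
    exact ⟨hy, Reachable.trans (Adj.reachable (show (G.induce P).Adj ⟨_, hx⟩ ⟨_, hu⟩ from h)) hr⟩

lemma comp_subset' (G : SimpleGraph V) {S D D' : Set V} (hD : IsCompOf G S D)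
    (hD' : IsCompOf G S D') {v : V} (hv : v ∈ D) (hv' : v ∈ D') : D ⊆ D' := by
  intro w hw
  obtain ⟨hne, hdis, hconn, hcl⟩ := hD
  obtain ⟨p⟩ := hconn.preconnected ⟨v, hv⟩ ⟨w, hw⟩
  refine mem_of_walk' G D' (fun a ha b hab hbD => hD'.2.2.2 a ha b hab ?_) p hv'
  exact fun hbS => (Set.disjoint_left.mp hdis hbD) hbS

lemma connected_of_dominating' (G : SimpleGraph V) {A C : Set V} (hAC : A ⊆ C)
    (hA : (G.induce A).Connected)
    (hdom : ∀ v ∈ C, v ∈ A ∨ ∃ a ∈ A, G.Adj v a) : (G.induce C).Connected := by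
  rw [connected_iff]
  constructor
  · rintro ⟨u, hu⟩ ⟨v, hv⟩
    have key : ∀ x (hx : x ∈ C), ∃ a, ∃ ha : a ∈ A,
        (G.induce C).Reachable ⟨x, hx⟩ ⟨a, hAC ha⟩ := by
      intro x hx
      rcases hdom x hx with hxA | ⟨a, ha, hadj⟩
      · exact ⟨x, hxA, Reachable.refl _⟩
      · exact ⟨a, ha, Adj.reachable (show (G.induce C).Adj ⟨x, hx⟩ ⟨a, hAC ha⟩ from hadj)⟩
    obtain ⟨a, ha, hra⟩ := key u hu
    obtain ⟨b, hb, hrb⟩ := key v hv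
    obtain ⟨q⟩ := hA.preconnected ⟨a, ha⟩ ⟨b, hb⟩
    exact hra.trans ((reach_mono' G hAC ha hb ⟨q⟩).trans hrb.symm)
  · obtain ⟨a⟩ := hA.nonempty
    exact ⟨⟨a.1, hAC a.2⟩⟩

/-- If `S` is a minimal separator with full components `D₁, D₂` and `A ⊆ D₁` is a
nonempty connected set with `D₁ ⊆ N[A]`, then `∂A = N(V(G) \ N[A])` is a minimal
separator with one full component containing `A` and one containing `D₂`. -/
theorem statement_17 [Fintype V] (G : SimpleGraph V)
    (S D₁ D₂ : Set V) (hD₁ : IsCompOf G S D₁) (hD₂ : IsCompOf G S D₂) (hne : D₁ ≠ D₂)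
    (hf₁ : FullTo G S D₁) (hf₂ : FullTo G S D₂)
    (A : Set V) (hA : A.Nonempty) (hAD₁ : A ⊆ D₁)
    (hconn : (G.induce A).Connected) (hcover : D₁ ⊆ closedNbhd G A) :
    IsMinSep G (nbhd G (Set.univ \ closedNbhd G A)) ∧
    (∃ C : Set V, IsCompOf G (nbhd G (Set.univ \ closedNbhd G A)) C ∧ A ⊆ C ∧
      FullTo G (nbhd G (Set.univ \ closedNbhd G A)) C ∧
      ∃ C' : Set V, IsCompOf G (nbhd G (Set.univ \ closedNbhd G A)) C' ∧ D₂ ⊆ C' ∧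
        FullTo G (nbhd G (Set.univ \ closedNbhd G A)) C' ∧ C ≠ C') := by
  set B : Set V := closedNbhd G A with hBdef
  set T : Set V := nbhd G (Set.univ \ B) with hTdef
  -- basic facts
  have hBA : A ⊆ B := Set.subset_union_left
  have hBsub : B ⊆ D₁ ∪ S := by
    rintro v (hv | ⟨hvA, a, ha, hadj⟩)
    · exact Or.inl (hAD₁ hv)
    · by_cases hvS : v ∈ S
      · exact Or.inr hvS
      · exact Or.inl (hD₁.2.2.2 a (hAD₁ ha) v hadj.symm hvS)
  have hTB : T ⊆ B := by
    rintro t ⟨ht1, _⟩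
    by_contra htB
    exact ht1 ⟨Set.mem_univ t, htB⟩
  have hwB : ∀ v ∈ B, ∀ w : V, G.Adj v w → w ∉ B → v ∈ T := by
    intro v hv w hadj hwB
    exact ⟨fun hv' => hv'.2 hv, w, ⟨Set.mem_univ w, hwB⟩, hadj⟩
  have hTA : ∀ a ∈ A, a ∉ T := by
    rintro a ha ⟨_, w, ⟨_, hwB⟩, hadj⟩
    by_cases hwA : w ∈ A
    · exact hwB (hBA hwA)
    · exact hwB (Or.inr ⟨hwA, a, ha, hadj.symm⟩)
  have hTnbhdA : ∀ t ∈ T, ∃ a ∈ A, G.Adj t a := by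
    intro t ht
    rcases hTB ht with htA | ⟨_, a, ha, hadj⟩
    · exact absurd ht (hTA t htA)
    · exact ⟨a, ha, hadj⟩
  -- D₂ is disjoint from B and T
  have hD₂B : ∀ d ∈ D₂, d ∉ B := by
    intro d hd hdB
    rcases hBsub hdB with hdD₁ | hdS
    · exact hne (Set.Subset.antisymm (comp_subset' G hD₁ hD₂ hdD₁ hd)
        (comp_subset' G hD₂ hD₁ hd hdD₁))
    · exact Set.disjoint_left.mp hD₂.2.1 hd hdS
  have hD₂T : ∀ d ∈ D₂, d ∉ T := fun d hd hdT => hD₂B d hd (hTB hdT)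
  -- the component C = B \ T containing A
  set C : Set V := B \ T with hCdef
  have hAC : A ⊆ C := fun a ha => ⟨hBA ha, hTA a ha⟩
  have hCcl : ∀ v ∈ C, ∀ w : V, G.Adj v w → w ∉ T → w ∈ C := by
    rintro v ⟨hvB, hvT⟩ w hadj hwT
    by_cases hwBc : w ∈ B
    · exact ⟨hwBc, hwT⟩
    · exact absurd (hwB v hvB w hadj hwBc) hvT
  have hCcomp : IsCompOf G T C := by
    refine ⟨⟨hA.choose, hAC hA.choose_spec⟩, Set.disjoint_left.mpr (fun v hv => hv.2), ?_, hCcl⟩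
    refine connected_of_dominating' G hAC hconn ?_
    rintro v ⟨hvB, _⟩
    rcases hvB with hvA | ⟨_, a, ha, hadj⟩
    · exact Or.inl hvA
    · exact Or.inr ⟨a, ha, hadj⟩
  have hCfull : FullTo G T C := by
    intro t ht
    obtain ⟨a, ha, hadj⟩ := hTnbhdA t ht
    exact ⟨a, hAC ha, hadj⟩
  -- the component C' containing D₂
  obtain ⟨d₀, hd₀⟩ := hD₂.1
  have hd₀T : d₀ ∉ T := hD₂T d₀ hd₀
  set Tc : Set V := {v | v ∉ T} with hTcdef
  have hd₀Tc : d₀ ∈ Tc := hd₀T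
  set C' : Set V := {v | ∃ h : v ∈ Tc, (G.induce Tc).Reachable ⟨d₀, hd₀Tc⟩ ⟨v, h⟩} with hC'def
  have hd₀C' : d₀ ∈ C' := ⟨hd₀Tc, Reachable.refl _⟩
  have hC'T : ∀ v ∈ C', v ∉ T := fun v hv => hv.1
  have hC'cl : ∀ v ∈ C', ∀ w : V, G.Adj v w → w ∉ T → w ∈ C' := by
    rintro v ⟨hvTc, hr⟩ w hadj hwT
    exact ⟨hwT, hr.trans (Adj.reachable
      (show (G.induce Tc).Adj ⟨v, hvTc⟩ ⟨w, hwT⟩ from hadj))⟩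
  have hC'clD : ∀ v ∈ C', ∀ w : V, G.Adj v w → w ∈ Tc → w ∈ C' :=
    fun v hv w h1 h2 => hC'cl v hv w h1 h2
  have hC'comp : IsCompOf G T C' := by
    refine ⟨⟨d₀, hd₀C'⟩, Set.disjoint_left.mpr hC'T, ?_, hC'cl⟩
    rw [connected_iff]
    refine ⟨?_, ⟨⟨d₀, hd₀C'⟩⟩⟩
    rintro ⟨u, hu⟩ ⟨v, hv⟩
    obtain ⟨hu', hru⟩ := id hu
    obtain ⟨hv', hrv⟩ := id hv
    obtain ⟨pu⟩ := hru
    obtain ⟨pv⟩ := hrv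
    obtain ⟨_, hru'⟩ := reach_restrict' G C' hC'clD pu hd₀C'
    obtain ⟨_, hrv'⟩ := reach_restrict' G C' hC'clD pv hd₀C'
    exact hru'.symm.trans hrv'
  have hD₂C' : D₂ ⊆ C' := by
    intro d hd
    have hsub : D₂ ⊆ Tc := fun x hx => hD₂T x hx
    exact ⟨hsub hd, reach_mono' G hsub hd₀ hd (hD₂.2.2.1.preconnected ⟨d₀, hd₀⟩ ⟨d, hd⟩)⟩
  have hC'full : FullTo G T C' := by
    intro t ht
    rcases hBsub (hTB ht) with htD₁ | htS
    · obtain ⟨ht1, w, ⟨_, hwBm⟩, hadj⟩ := id ht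
      have hwS : w ∈ S := by
        by_contra hwS
        exact hwBm (hcover (hD₁.2.2.2 t htD₁ w hadj hwS))
      have hwT : w ∉ T := fun h => hwBm (hTB h)
      obtain ⟨d, hd, hdadj⟩ := hf₂ w hwS
      have hwC' : w ∈ C' := hC'cl d (hD₂C' hd) w hdadj.symm hwT
      exact ⟨w, hwC', hadj⟩
    · obtain ⟨d, hd, hdadj⟩ := hf₂ t htS
      exact ⟨d, hD₂C' hd, hdadj⟩
  have hCC' : C ≠ C' := by
    intro h
    have hd₀C : d₀ ∈ C := h ▸ hd₀C'
    exact hD₂B d₀ hd₀ hd₀C.1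
  exact ⟨⟨C, C', hCcomp, hC'comp, hCC', hCfull, hC'full⟩,
    C, hCcomp, hAC, hCfull, C', hC'comp, hD₂C', hC'full, hCC'⟩
end

section
/- Let G be a graph, F a minimal chordal completion of G (a set of nonedges whose addition makes G chordal, minimal under inclusion), and Γ a potential segment in G that F respects. Then for each component D of G − Γ: (1) D is still a connected component of (G+F) − Γ; (2) N_G(D) is a minimal separator in G+F with D a full component; and (3) F contains every closure edge of Γ, i.e., for each component D of G − Γ, the set N_G(D) is a clique in G+F. -/
open SimpleGraph

variable {V : Type*}

/-- A graph is chordal if it has no induced cycle of length at least 4. -/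
def IsChordal (G : SimpleGraph V) : Prop :=
  ∀ n : ℕ, 4 ≤ n → IsEmpty (cycleGraph n ↪g G)

/-- `H` is a minimal chordal completion of `G` (i.e. `H = G + F` for a minimal chordal
fill-in `F`). -/
def IsMinChordalCompletion (G H : SimpleGraph V) : Prop :=
  G ≤ H ∧ IsChordal H ∧ ∀ H' : SimpleGraph V, G ≤ H' → H' ≤ H → IsChordal H' → H' = H

/-- `Γ` is a potential segment of `G`. -/
def IsPotentialSegment (G : SimpleGraph V) (Γ : Set V) : Prop :=
  ∀ D : Set V, IsCompOf G Γ D → IsMinSep G (nbhd G D)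

/-- The completion `H` of `G` respects the potential segment `Γ`: every fill edge with
one endpoint in a component `D` of `G - Γ` has its other endpoint in `N_G[D]`. -/
def Respects (G H : SimpleGraph V) (Γ : Set V) : Prop :=
  ∀ D : Set V, IsCompOf G Γ D →
    ∀ u ∈ D, ∀ v : V, H.Adj u v → ¬ G.Adj u v → v ∈ closedNbhd G D

/-!
The first two claims come from `F` respecting `Γ`: a fill edge leaving a component `D` of
`G - Γ` ends in `N_G[D]`, so `D` stays closed in `G + F` both off `Γ` and off `N_G(D)`, while
a second full component of `G - N_G(D)` only grows in `G + F`. The third claim is the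
classical fact that minimal separators of a chordal graph are cliques: two nonadjacent
vertices `x, y` of `S` are joined by shortest paths through two different full components of
`G - S`, and these close up to a chordless cycle of length at least four.
-/

namespace SimpleGraph

lemma cycleGraph_adj_iff_val {n : ℕ} (hn : 2 ≤ n) {i j : Fin n} :
    (cycleGraph n).Adj i j ↔
      i.1 + 1 = j.1 ∨ j.1 + 1 = i.1 ∨ (i.1 = 0 ∧ j.1 + 1 = n) ∨ (j.1 = 0 ∧ i.1 + 1 = n) := by
  have hsub : ∀ a b : Fin n,
      ((a - b : Fin n) : ℕ) = if b.1 ≤ a.1 then a.1 - b.1 else n + a.1 - b.1 := by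
    intro a b
    split_ifs with h
    · exact Fin.coe_sub_iff_le.2 h
    · exact Fin.coe_sub_iff_lt.2 (not_le.1 h)
  rw [cycleGraph_adj', hsub, hsub]
  have := i.2
  have := j.2
  split_ifs <;> omega

namespace Walk

variable {W : Type*} {G : SimpleGraph V} {G' : SimpleGraph W} {u v x y : V}

lemma IsChordless.map {f : G ↪g G'} {p : G.Walk u v} (hp : p.IsChordless) :
    (p.map f.toHom).IsChordless := by
  rw [isChordless_iff_forall_mem_edges] at hp ⊢
  simp only [support_map, edges_map, List.mem_map]
  rintro _ _ ⟨a, ha, rfl⟩ ⟨b, hb, rfl⟩ hab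
  exact ⟨s(a, b), hp ha hb (f.map_adj_iff.1 hab), rfl⟩

lemma isChordless_of_length_eq_dist {p : G.Walk u v} (hp : p.length = G.dist u v) :
    p.IsChordless := by
  rw [isChordless_iff_forall_mem_edges]
  simp only [mem_support_iff_exists_getVert]
  rintro _ _ ⟨i, rfl, hi⟩ ⟨j, rfl, hj⟩ hadj
  wlog hij : i ≤ j generalizing i j
  · rw [Sym2.eq_swap]
    exact this j hj i hi hadj.symm (by omega)
  obtain rfl | rfl | hij2 : j = i ∨ j = i + 1 ∨ i + 2 ≤ j := by omega
  · exact absurd hadj (G.loopless.irrefl _)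
  · exact (mk_mem_edges_iff_exists p).2 ⟨i, by omega, rfl⟩
  · have hshort := G.dist_le ((p.take i).append (cons hadj (p.drop j)))
    simp only [length_append, take_length, length_cons, drop_length] at hshort
    omega

lemma two_le_length {p : G.Walk x y} (hne : x ≠ y) (hxy : ¬ G.Adj x y) : 2 ≤ p.length := by
  by_contra! h
  interval_cases hp : p.length
  · exact hne (eq_of_length_eq_zero hp)
  · exact hxy (adj_of_length_eq_one hp)

lemma isCycle_append {p : G.Walk x y} {q : G.Walk y x} (hp : p.IsPath) (hq : q.IsPath)
    (hne : x ≠ y) (hxy : ¬ G.Adj x y)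
    (hpq : ∀ z ∈ p.support, z ∈ q.support → z = x ∨ z = y) : (p.append q).IsCycle := by
  have hpx : x ∉ p.support.tail := by
    have := hp.support_nodup
    rw [← cons_tail_support, List.nodup_cons] at this
    exact this.1
  have hqy : y ∉ q.support.tail := by
    have := hq.support_nodup
    rw [← cons_tail_support, List.nodup_cons] at this
    exact this.1
  rw [isCycle_def, isTrail_append, tail_support_append, List.nodup_append]
  refine ⟨⟨hp.isTrail, hq.isTrail, ?_⟩, ?_, ⟨hp.support_nodup.sublist (List.tail_sublist _),
    hq.support_nodup.sublist (List.tail_sublist _), ?_⟩⟩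
  · intro e hep heq
    induction e using Sym2.ind with | _ a b => ?_
    have hab := p.adj_of_mem_edges hep
    have ha := hpq a (p.fst_mem_support_of_mem_edges hep) (q.fst_mem_support_of_mem_edges heq)
    have hb := hpq b (p.snd_mem_support_of_mem_edges hep) (q.snd_mem_support_of_mem_edges heq)
    rcases ha with rfl | rfl <;> rcases hb with rfl | rfl
    exacts [hab.ne rfl, hxy hab, hxy hab.symm, hab.ne rfl]
  · intro h
    have := congrArg length h
    rw [length_append, length_nil] at this
    exact hne (eq_of_length_eq_zero (p := p) (by omega))
  · rintro z hzp _ hzq rfl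
    rcases hpq z (List.mem_of_mem_tail hzp) (List.mem_of_mem_tail hzq) with rfl | rfl
    · exact hpx hzp
    · exact hqy hzq

lemma IsChordless.append {z : V} {p : G.Walk x y} {q : G.Walk y z} (hp : p.IsChordless)
    (hq : q.IsChordless)
    (hpq : ∀ a ∈ p.support, ∀ b ∈ q.support, G.Adj a b → a ∈ q.support ∨ b ∈ p.support) :
    (p.append q).IsChordless := by
  rw [isChordless_iff_forall_mem_edges] at hp hq ⊢
  intro a b ha hb hab
  rw [mem_support_append_iff] at ha hb
  rw [edges_append, List.mem_append]
  have : (a ∈ p.support ∧ b ∈ p.support) ∨ (a ∈ q.support ∧ b ∈ q.support) := by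
    rcases ha with ha | ha <;> rcases hb with hb | hb
    · exact .inl ⟨ha, hb⟩
    · rcases hpq a ha b hb hab with ha' | hb' <;> tauto
    · rcases hpq b hb a ha hab.symm with hb' | ha' <;> tauto
    · exact .inr ⟨ha, hb⟩
  exact this.imp (fun h => hp h.1 h.2 hab) (fun h => hq h.1 h.2 hab)

lemma IsChordless.nonempty_cycleGraph_embedding {p : G.Walk u u} (hch : p.IsChordless)
    (hc : p.IsCycle) : Nonempty (cycleGraph p.length ↪g G) := by
  have hn := hc.three_le_length
  have hidx : ∀ k ≤ p.length, ∀ i : Fin p.length, p.getVert k = p.getVert i →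
      i.1 = k ∨ (i.1 = 0 ∧ k = p.length) := by
    intro k hk i h
    rcases hk.lt_or_eq with hk | rfl
    · exact .inl (hc.getVert_injOn' (by simp; omega) (by simp; omega) h).symm
    · rw [getVert_length] at h
      exact .inr ⟨(hc.getVert_injOn' (by simp) (by simp; omega)
        ((getVert_zero p).trans h)).symm, rfl⟩
  refine ⟨⟨⟨fun i => p.getVert i, fun i j h => ?_⟩, fun {i j} => ?_⟩⟩
  · rcases hidx i (by omega) j h with h' | h' <;> exact Fin.ext (by omega)
  change G.Adj (p.getVert i) (p.getVert j) ↔ _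
  rw [cycleGraph_adj_iff_val (by omega)]
  constructor
  · intro hadj
    obtain ⟨k, hk, he⟩ := (mk_mem_edges_iff_exists p).1
      (hch.mem_edges (p.getVert_mem_support _) (p.getVert_mem_support _) hadj)
    rw [Sym2.eq_iff] at he
    rcases he with ⟨h1, h2⟩ | ⟨h1, h2⟩
    · have := hidx k (by omega) i h1
      have := hidx (k + 1) (by omega) j h2
      omega
    · have := hidx k (by omega) j h1
      have := hidx (k + 1) (by omega) i h2
      omega
  · have hwrap : G.Adj (p.getVert (p.length - 1)) (p.getVert 0) := by
      simpa [show p.length - 1 + 1 = p.length by omega] using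
        p.adj_getVert_succ (i := p.length - 1) (by omega)
    rintro (h | h | ⟨hi, hj⟩ | ⟨hj, hi⟩)
    · rw [← h]; exact p.adj_getVert_succ (by omega)
    · rw [← h]; exact (p.adj_getVert_succ (by omega)).symm
    · rw [hi, show j.1 = p.length - 1 by omega]; exact hwrap.symm
    · rw [hj, show i.1 = p.length - 1 by omega]; exact hwrap

end Walk

end SimpleGraph

lemma IsChordal.length_lt_four {G : SimpleGraph V} (hG : IsChordal G) {u : V} {p : G.Walk u u}
    (hc : p.IsCycle) (hch : p.IsChordless) : p.length < 4 := by
  by_contra! h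
  obtain ⟨f⟩ := hch.nonempty_cycleGraph_embedding hc
  exact (hG _ h).false f

section Components

variable {K K' : SimpleGraph V} {S D D' : Set V} {v : V}

lemma exists_isCompOf_mem (hv : v ∉ S) : ∃ D, IsCompOf K S D ∧ v ∈ D := by
  classical
  set D := {w | ∃ p : K.Walk v w, ∀ z ∈ p.support, z ∉ S}
  have hvD : v ∈ D := ⟨.nil, by simpa⟩
  refine ⟨D, ⟨⟨v, hvD⟩, ?_, ?_, ?_⟩, hvD⟩
  · exact Set.disjoint_left.2 fun w ⟨p, hp⟩ => hp w p.end_mem_support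
  · refine K.induce_connected_of_patches v hvD fun {w} ⟨p, hp⟩ => ⟨{z | z ∈ p.support}, ?_,
      p.start_mem_support, p.end_mem_support, p.connected_induce_support.preconnected _ _⟩
    intro z hz
    exact ⟨p.takeUntil z hz, fun y hy => hp y (p.support_takeUntil_subset_support hz hy)⟩
  · rintro u ⟨p, hp⟩ w huw hw
    refine ⟨p.concat huw, fun z hz => ?_⟩
    rw [Walk.support_concat, List.mem_append, List.mem_singleton] at hz
    rcases hz with hz | rfl
    exacts [hp z hz, hw]

namespace IsCompOf

lemma subset_of_le (hle : K ≤ K') (hD : IsCompOf K S D) (hD' : IsCompOf K' S D')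
    (hv : v ∈ D) (hv' : v ∈ D') : D ⊆ D' := by
  intro w hw
  obtain ⟨q⟩ := hD.2.2.1.preconnected ⟨v, hv⟩ ⟨w, hw⟩
  suffices ∀ {a b : D}, (K.induce D).Walk a b → a.1 ∈ D' → b.1 ∈ D' from this q hv'
  intro a b q
  induction q with
  | nil => exact id
  | cons hadj _ ih =>
    exact fun ha => ih (hD'.2.2.2 _ ha _ (hle hadj) (Set.disjoint_left.1 hD.2.1 (Subtype.prop _)))

lemma eq_of_mem (hD : IsCompOf K S D) (hD' : IsCompOf K S D') (hv : v ∈ D) (hv' : v ∈ D') :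
    D = D' :=
  (hD.subset_of_le le_rfl hD' hv hv').antisymm (hD'.subset_of_le le_rfl hD hv' hv)

lemma exists_superset_of_le (hle : K ≤ K') (hD : IsCompOf K S D) :
    ∃ D', IsCompOf K' S D' ∧ D ⊆ D' := by
  obtain ⟨v, hv⟩ := hD.1
  obtain ⟨D', hD', hv'⟩ := exists_isCompOf_mem (K := K') (Set.disjoint_left.1 hD.2.1 hv)
  exact ⟨D', hD', hD.subset_of_le hle hD' hv hv'⟩

lemma nbhd_subset (hD : IsCompOf K S D) : nbhd K D ⊆ S := by
  rintro w ⟨hwD, d, hd, hwd⟩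
  by_contra hw
  exact hwD (hD.2.2.2 d hd w hwd.symm hw)

lemma isCompOf_nbhd (hD : IsCompOf K S D) : IsCompOf K (nbhd K D) D := by
  obtain ⟨hne, -, hconn, -⟩ := hD
  refine ⟨hne, Set.disjoint_left.2 fun v hv h => h.1 hv, hconn, fun u hu w huw hw => ?_⟩
  by_contra hwD
  exact hw ⟨hwD, u, hu, huw.symm⟩

end IsCompOf

lemma FullTo.mono (hle : K ≤ K') (hDD' : D ⊆ D') (h : FullTo K S D) : FullTo K' S D' :=
  fun s hs => let ⟨d, hd, hsd⟩ := h s hs; ⟨d, hDD' hd, hle hsd⟩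

lemma IsMinSep.of_le (hle : K ≤ K') (hS : IsMinSep K S) (hD : IsCompOf K S D)
    (hD' : IsCompOf K' S D) (hfull : FullTo K S D) : IsMinSep K' S := by
  obtain ⟨D₁, D₂, hD₁, hD₂, hne, hf₁, hf₂⟩ := hS
  obtain ⟨E, hE, hEf, hED⟩ : ∃ E, IsCompOf K S E ∧ FullTo K S E ∧ E ≠ D := by
    by_cases h : D₁ = D
    · exact ⟨D₂, hD₂, hf₂, fun h₂ => hne (h.trans h₂.symm)⟩
    · exact ⟨D₁, hD₁, hf₁, h⟩
  obtain ⟨E', hE', hEE'⟩ := hE.exists_superset_of_le hle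
  obtain ⟨w, hw⟩ := hE.1
  refine ⟨D, E', hD', hE', fun h => hED ?_, hfull.mono hle subset_rfl, hEf.mono hle hEE'⟩
  exact hE.eq_of_mem hD hw (h ▸ hEE' hw)

end Components

lemma exists_isChordless_path_through {G : SimpleGraph V} {D : Set V}
    (hD : (G.induce D).Connected) {x y : V} (hx : ∃ d ∈ D, G.Adj x d) (hy : ∃ d ∈ D, G.Adj y d) :
    ∃ p : G.Walk x y, p.IsPath ∧ p.IsChordless ∧ ∀ z ∈ p.support, z = x ∨ z = y ∨ z ∈ D := by
  obtain ⟨d, hd, hxd⟩ := hx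
  obtain ⟨e, he, hye⟩ := hy
  set T : Set V := insert x (insert y D)
  have hDT : D ⊆ T := fun z hz => .inr (.inr hz)
  have hreach : (G.induce T).Reachable ⟨x, .inl rfl⟩ ⟨y, .inr (.inl rfl)⟩ := by
    have hxd' : (G.induce T).Adj ⟨x, .inl rfl⟩ ⟨d, hDT hd⟩ := hxd
    have hey' : (G.induce T).Adj ⟨e, hDT he⟩ ⟨y, .inr (.inl rfl)⟩ := hye.symm
    have hde := (hD.preconnected ⟨d, hd⟩ ⟨e, he⟩).map (G.induceHomOfLE hDT).toHom
    exact hxd'.reachable.trans (hde.trans hey'.reachable)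
  -- a shortest path in the induced subgraph on `{x, y} ∪ D` stays chordless in `G`
  obtain ⟨q, hq⟩ := hreach.exists_walk_length_eq_dist
  let f : G.induce T ↪g G := Embedding.induce T
  have hT : ∀ z ∈ (q.map f.toHom).support, z ∈ T := by
    simp only [Walk.support_map, List.mem_map]
    rintro _ ⟨z, -, rfl⟩
    exact z.2
  exact ⟨q.map f.toHom, (q.isPath_of_length_eq_dist hq).map f.injective,
    (Walk.isChordless_of_length_eq_dist hq).map, hT⟩

lemma IsChordal.isClique_of_isMinSep {G : SimpleGraph V} {S : Set V} (hG : IsChordal G)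
    (hS : IsMinSep G S) : G.IsClique S := by
  obtain ⟨D₁, D₂, hD₁, hD₂, hne, hf₁, hf₂⟩ := hS
  intro x hx y hy hxy
  by_contra hadj
  obtain ⟨p, hp, hpc, hpD⟩ := exists_isChordless_path_through hD₁.2.2.1 (hf₁ x hx) (hf₁ y hy)
  obtain ⟨q, hq, hqc, hqD⟩ := exists_isChordless_path_through hD₂.2.2.1 (hf₂ y hy) (hf₂ x hx)
  have hD₁₂ : ∀ a ∈ D₁, a ∉ D₂ := fun a ha ha' => hne (hD₁.eq_of_mem hD₂ ha ha')
  have hcyc : (p.append q).IsCycle := by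
    refine Walk.isCycle_append hp hq hxy hadj fun z hzp hzq => ?_
    rcases hpD z hzp with h | h | h <;> rcases hqD z hzq with h' | h' | h' <;> tauto
  have hchord : (p.append q).IsChordless := by
    refine hpc.append hqc fun a ha b hb hab => ?_
    rcases hpD a ha with rfl | rfl | ha
    · exact .inl q.end_mem_support
    · exact .inl q.start_mem_support
    rcases hqD b hb with rfl | rfl | hb
    · exact .inr p.end_mem_support
    · exact .inr p.start_mem_support
    exact absurd hb (hD₁₂ b (hD₁.2.2.2 a ha b hab (Set.disjoint_left.1 hD₂.2.1 hb)))
  have := hG.length_lt_four hcyc hchord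
  have := p.two_le_length hxy hadj
  have := q.two_le_length hxy.symm (hadj ∘ .symm)
  rw [Walk.length_append] at *
  omega

namespace Respects

variable {G H : SimpleGraph V} {Γ S D : Set V}

lemma isCompOf (hle : G ≤ H) (hresp : Respects G H Γ) (hD : IsCompOf G Γ D)
    (hS : IsCompOf G S D) : IsCompOf H S D := by
  have hnbhd := hS.nbhd_subset
  obtain ⟨hne, hdisj, hconn, hclosed⟩ := hS
  refine ⟨hne, hdisj, hconn.mono fun _ _ h => hle h, fun u hu w huw hw => ?_⟩
  by_cases hG : G.Adj u w
  · exact hclosed u hu w hG hw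
  · rcases hresp D hD u hu w huw hG with h | h
    exacts [h, absurd (hnbhd h) hw]

lemma isCompOf_iff (hle : G ≤ H) (hresp : Respects G H Γ) :
    IsCompOf G Γ D ↔ IsCompOf H Γ D := by
  refine ⟨fun hD => hresp.isCompOf hle hD hD, fun hD => ?_⟩
  obtain ⟨v, hv⟩ := hD.1
  obtain ⟨D', hD', hv'⟩ := exists_isCompOf_mem (K := G) (Set.disjoint_left.1 hD.2.1 hv)
  rwa [hD.eq_of_mem (hresp.isCompOf hle hD' hD') hv hv']

end Respects

theorem statement_18_general (G H : SimpleGraph V) (Γ : Set V)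
    (hH : IsMinChordalCompletion G H) (hΓ : IsPotentialSegment G Γ)
    (hresp : Respects G H Γ) :
    (∀ D : Set V, IsCompOf G Γ D ↔ IsCompOf H Γ D) ∧
    (∀ D : Set V, IsCompOf G Γ D →
      IsMinSep H (nbhd G D) ∧ IsCompOf H (nbhd G D) D ∧ FullTo H (nbhd G D) D ∧
      H.IsClique (nbhd G D)) := by
  obtain ⟨hle, hchordal, -⟩ := hH
  refine ⟨fun D => hresp.isCompOf_iff hle, fun D hD => ?_⟩
  have hfull : FullTo G (nbhd G D) D := fun _ hs => hs.2
  have hDH : IsCompOf H (nbhd G D) D := hresp.isCompOf hle hD hD.isCompOf_nbhd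
  have hsep : IsMinSep H (nbhd G D) := (hΓ D hD).of_le hle hD.isCompOf_nbhd hDH hfull
  exact ⟨hsep, hDH, hfull.mono hle subset_rfl, hchordal.isClique_of_isMinSep hsep⟩

/-- Basic properties of a minimal chordal completion respecting a potential segment:
components of `G - Γ` coincide with those of `(G+F) - Γ`; for each such component `D`,
`N_G(D)` is still a minimal separator of `G+F` with `D` a full component; and every
closure edge of `Γ` lies in `F`, i.e. each `N_G(D)` is a clique of `G+F`. -/
theorem statement_18 [Fintype V] (G H : SimpleGraph V) (Γ : Set V)
    (hH : IsMinChordalCompletion G H) (hΓ : IsPotentialSegment G Γ)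
    (hresp : Respects G H Γ) :
    (∀ D : Set V, IsCompOf G Γ D ↔ IsCompOf H Γ D) ∧
    (∀ D : Set V, IsCompOf G Γ D →
      IsMinSep H (nbhd G D) ∧ IsCompOf H (nbhd G D) D ∧ FullTo H (nbhd G D) D ∧
      H.IsClique (nbhd G D)) :=
  statement_18_general G H Γ hH hΓ hresp
end

section
/- Let G be a graph, I a maximal independent set in G, u ∈ I, F an I-free minimal chordal completion of G (no edge of F is incident to a vertex of I), and (T, β) a clique tree of G + F. Then the union of all bags of (T, β) that contain u equals the closed neighborhood N_G[u] of u in G. -/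
open SimpleGraph

variable {V : Type*}

/-- `Ω` is a maximal clique of `G`. -/
def MaxClique (G : SimpleGraph V) (Ω : Set V) : Prop :=
  G.IsClique Ω ∧ ∀ T : Set V, G.IsClique T → Ω ⊆ T → T = Ω

/-- For a maximal independent set `I`, a vertex `u ∈ I`, an `I`-free minimal chordal
completion `H = G + F`, and a clique tree `(T, β)` of `H`: the union of all bags
containing `u` equals `N_G[u]`. -/
theorem statement_19 {ι : Type*} [Fintype V] [Fintype ι] (G : SimpleGraph V)
    (I : Set V) (hind : ∀ a ∈ I, ∀ b ∈ I, ¬ G.Adj a b)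
    (hmaxI : ∀ v : V, v ∉ I → ∃ u ∈ I, G.Adj v u)
    (u : V) (hu : u ∈ I)
    (H : SimpleGraph V) (hcomp : IsMinChordalCompletion G H)
    (hIfree : ∀ a b : V, H.Adj a b → ¬ G.Adj a b → a ∉ I ∧ b ∉ I)
    (T : SimpleGraph ι) (hT : T.IsTree) (β : ι → Set V)
    (hsupp : ∀ v : V, ({x : ι | v ∈ β x}).Nonempty ∧
      (T.induce {x : ι | v ∈ β x}).Connected)
    (hedge : ∀ a b : V, H.Adj a b → ∃ x : ι, a ∈ β x ∧ b ∈ β x)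
    (hbags : ∀ x : ι, MaxClique H (β x))
    (hall : ∀ Ω : Set V, MaxClique H Ω → ∃ x : ι, β x = Ω) :
    (⋃ x ∈ {x : ι | u ∈ β x}, β x) = closedNbhd G ({u} : Set V) := by
  ext w
  simp only [Set.mem_iUnion, Set.mem_setOf_eq, closedNbhd, nbhd, Set.mem_union,
    Set.mem_singleton_iff, exists_prop]
  constructor
  · rintro ⟨x, hux, hwx⟩
    by_cases hwu : w = u
    · exact Or.inl hwu
    · right
      have hadj : H.Adj u w := (hbags x).1 hux hwx (fun h => hwu h.symm)
      have hG : G.Adj u w := by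
        by_contra hG
        exact (hIfree u w hadj hG).1 hu
      exact ⟨hwu, u, rfl, hG.symm⟩
  · rintro (rfl | ⟨hwu, d, rfl, hadj⟩)
    · obtain ⟨x, hx⟩ := (hsupp w).1
      exact ⟨x, hx, hx⟩
    · obtain ⟨x, h1, h2⟩ := hedge d w (hcomp.1 hadj.symm)
      exact ⟨x, h1, h2⟩
end
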